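/- arXiv:1909.05612 — 2 statements merged into one kernel-verified Lean document; each statement's English description precedes it below -/
import Mathlib

section
/- Asymptotics of supercritical Curie–Weiss correlations: fix β > 1 and an even ℓ ≥ 2. For each N ≥ ℓ let X_1,…,X_N be CW(β,N)-distributed. Then E_{β,N}(X_1·X_2·…·X_ℓ) → m(β)^ℓ as N → ∞, where m(β) > 0 is the unique positive solution of x = tanh(βx). -/
open MeasureTheory Filter Real Topology ENNReal

/-- The spin value associated to a Boolean: `true ↦ +1`, `false ↦ -1`. -/
noncomputable def spin (b : Bool) : ℝ := if b then 1 else -1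

/-- The (unnormalized) Curie–Weiss Boltzmann weight of a configuration. -/
noncomputable def cwWeight (β : ℝ) (N : ℕ) (σ : Fin N → Bool) : ℝ :=
  Real.exp (β / (2 * N) * (∑ i, spin (σ i)) ^ 2)

/-- The Curie–Weiss partition function. -/
noncomputable def cwZ (β : ℝ) (N : ℕ) : ℝ :=
  ∑ σ : Fin N → Bool, cwWeight β N σ

/-- Expectation with respect to the Curie–Weiss distribution `CW(β,N)`. -/
noncomputable def cwExp (β : ℝ) (N : ℕ) (f : (Fin N → Bool) → ℝ) : ℝ :=
  (∑ σ : Fin N → Bool, cwWeight β N σ * f σ) / cwZ β N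

/-- Law on `ℝ` of the observable `g` under the Curie–Weiss distribution `CW(β,N)`. -/
noncomputable def cwLaw (β : ℝ) (N : ℕ) (g : (Fin N → Bool) → ℝ) : Measure ℝ :=
  ∑ σ : Fin N → Bool, ENNReal.ofReal (cwWeight β N σ / cwZ β N) • Measure.dirac (g σ)

/-- The correlation `E_{β,N}(X_1 ⋯ X_ℓ)` of the first `ℓ` spins. -/
noncomputable def cwCorr (β : ℝ) (N ℓ : ℕ) : ℝ :=
  cwExp β N (fun σ => ∏ j ∈ Finset.univ.filter (fun j : Fin N => (j : ℕ) < ℓ), spin (σ j))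

section CWAux
open Set

-- Gaussian shift lemma
lemma gauss_shift (a c : ℝ) (hc : 0 < c) :
    ∫ u : ℝ, Real.exp (a * u - c * u ^ 2) = Real.sqrt (π / c) * Real.exp (a ^ 2 / (4 * c)) := by
  have h : ∀ u : ℝ, a * u - c * u ^ 2 = -c * (u - a / (2 * c)) ^ 2 + a ^ 2 / (4 * c) := by
    intro u; field_simp; ring
  have : (fun u : ℝ => Real.exp (a * u - c * u ^ 2))
      = fun u : ℝ => Real.exp (-c * (u + (- (a / (2 * c)))) ^ 2) * Real.exp (a ^ 2 / (4 * c)) := by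
    funext u; rw [← Real.exp_add]; congr 1; rw [h u]; ring
  rw [this, integral_mul_const, integral_add_right_eq_self (fun u : ℝ => Real.exp (-c * u ^ 2)),
    integral_gaussian]

lemma integrable_gauss_shift (a c : ℝ) (hc : 0 < c) :
    Integrable (fun u : ℝ => Real.exp (a * u - c * u ^ 2)) := by
  have : (fun u : ℝ => Real.exp (a * u - c * u ^ 2))
      = fun u : ℝ => Real.exp (-c * (u + (- (a / (2 * c)))) ^ 2) * Real.exp (a ^ 2 / (4 * c)) := by
    funext u; rw [← Real.exp_add]; congr 1; field_simp; ring
  rw [this]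
  exact ((integrable_exp_neg_mul_sq hc).comp_add_right _).mul_const _

lemma card_filter_lt (N ℓ : ℕ) (h : ℓ ≤ N) :
    (Finset.univ.filter (fun j : Fin N => (j : ℕ) < ℓ)).card = ℓ := by
  have : (Finset.univ.filter (fun j : Fin N => (j : ℕ) < ℓ))
      = Finset.map (Fin.castLEEmb h) Finset.univ := by
    ext j
    simp only [Finset.mem_filter, Finset.mem_univ, true_and, Finset.mem_map]
    constructor
    · intro hj
      exact ⟨⟨(j : ℕ), hj⟩, by apply Fin.ext; simp [Fin.castLEEmb]⟩
    · rintro ⟨a, rfl⟩; simpa using a.isLt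
  rw [this, Finset.card_map, Finset.card_univ, Fintype.card_fin]

lemma sum_factorize (β u : ℝ) (N ℓ : ℕ) (h : ℓ ≤ N) :
    ∑ σ : Fin N → Bool,
      Real.exp (β * (∑ i, spin (σ i)) * u) *
        ∏ j ∈ Finset.univ.filter (fun j : Fin N => (j : ℕ) < ℓ), spin (σ j)
    = (2 * Real.sinh (β * u)) ^ ℓ * (2 * Real.cosh (β * u)) ^ (N - ℓ) := by
  have key : ∀ σ : Fin N → Bool,
      Real.exp (β * (∑ i, spin (σ i)) * u) *
        ∏ j ∈ Finset.univ.filter (fun j : Fin N => (j : ℕ) < ℓ), spin (σ j)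
      = ∏ i : Fin N, (Real.exp (β * u * spin (σ i)) *
          (if (i : ℕ) < ℓ then spin (σ i) else 1)) := by
    intro σ
    rw [Finset.prod_mul_distrib, ← Real.exp_sum, ← Finset.prod_filter]
    congr 1
    congr 1
    rw [Finset.mul_sum, Finset.sum_mul]
    exact Finset.sum_congr rfl fun i _ => by ring
  simp only [key]
  rw [← Fintype.prod_sum (fun (i : Fin N) (b : Bool) =>
    Real.exp (β * u * spin b) * (if (i : ℕ) < ℓ then spin b else 1))]
  have hb : ∀ i : Fin N, (∑ b : Bool, Real.exp (β * u * spin b) * (if (i : ℕ) < ℓ then spin b else 1))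
      = if (i : ℕ) < ℓ then 2 * Real.sinh (β * u) else 2 * Real.cosh (β * u) := by
    intro i
    by_cases hi : (i : ℕ) < ℓ <;>
      simp [hi, spin, Real.sinh_eq, Real.cosh_eq, Fintype.sum_bool, mul_one, mul_neg_one] <;>
      ring
  rw [Finset.prod_congr rfl fun i _ => hb i, Finset.prod_ite, Finset.prod_const,
    Finset.prod_const, card_filter_lt N ℓ h]
  congr 2
  have := Finset.card_filter_add_card_filter_not (s := (Finset.univ : Finset (Fin N)))
    (p := fun j : Fin N => (j : ℕ) < ℓ)
  rw [card_filter_lt N ℓ h] at this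
  simp only [Finset.card_univ, Fintype.card_fin] at this
  omega

noncomputable def phiCW (β u : ℝ) : ℝ := Real.log (2 * Real.cosh (β * u)) - β / 2 * u ^ 2

lemma two_cosh_pos (x : ℝ) : 0 < 2 * Real.cosh x := by positivity

lemma exp_nphi (β u : ℝ) (N : ℕ) :
    Real.exp ((N : ℝ) * phiCW β u)
      = (2 * Real.cosh (β * u)) ^ N * Real.exp (-(β * N / 2) * u ^ 2) := by
  have h : (N : ℝ) * phiCW β u
      = (N : ℝ) * Real.log (2 * Real.cosh (β * u)) + (-(β * N / 2) * u ^ 2) := by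
    unfold phiCW; ring
  rw [h, Real.exp_add, Real.exp_nat_mul, Real.exp_log (two_cosh_pos _)]

-- sum with weights equals integral, for general ℓ ≤ N
lemma sum_weight_eq (β : ℝ) (hβ : 0 < β) (N ℓ : ℕ) (hN1 : 1 ≤ N) (hℓN : ℓ ≤ N) :
    ∑ σ : Fin N → Bool, cwWeight β N σ *
        ∏ j ∈ Finset.univ.filter (fun j : Fin N => (j : ℕ) < ℓ), spin (σ j)
    = (Real.sqrt (π / (β * N / 2)))⁻¹ *
        ∫ u : ℝ, (2 * Real.sinh (β * u)) ^ ℓ * (2 * Real.cosh (β * u)) ^ (N - ℓ) *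
          Real.exp (-(β * N / 2) * u ^ 2) := by
  set c : ℝ := β * N / 2 with hcdef
  have hN0 : (0 : ℝ) < N := by exact_mod_cast hN1
  have hc : 0 < c := by positivity
  have hw : ∀ σ : Fin N → Bool, cwWeight β N σ
      = (Real.sqrt (π / c))⁻¹ * ∫ u : ℝ, Real.exp (β * (∑ i, spin (σ i)) * u - c * u ^ 2) := by
    intro σ
    rw [gauss_shift _ _ hc]
    rw [inv_mul_cancel_left₀ (by positivity : Real.sqrt (π / c) ≠ 0)]
    unfold cwWeight
    congr 1
    field_simp
    ring
  calc ∑ σ : Fin N → Bool, cwWeight β N σ *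
        ∏ j ∈ Finset.univ.filter (fun j : Fin N => (j : ℕ) < ℓ), spin (σ j)
      = (Real.sqrt (π / c))⁻¹ * ∑ σ : Fin N → Bool,
          ∫ u : ℝ, Real.exp (β * (∑ i, spin (σ i)) * u - c * u ^ 2) *
            ∏ j ∈ Finset.univ.filter (fun j : Fin N => (j : ℕ) < ℓ), spin (σ j) := by
        rw [Finset.mul_sum]
        refine Finset.sum_congr rfl fun σ _ => ?_
        rw [hw σ, integral_mul_const]
        ring
    _ = (Real.sqrt (π / c))⁻¹ * ∫ u : ℝ, ∑ σ : Fin N → Bool,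
          Real.exp (β * (∑ i, spin (σ i)) * u - c * u ^ 2) *
            ∏ j ∈ Finset.univ.filter (fun j : Fin N => (j : ℕ) < ℓ), spin (σ j) := by
        rw [integral_finset_sum]
        intro σ _
        exact (integrable_gauss_shift _ _ hc).mul_const _
    _ = (Real.sqrt (π / c))⁻¹ * ∫ u : ℝ,
          (2 * Real.sinh (β * u)) ^ ℓ * (2 * Real.cosh (β * u)) ^ (N - ℓ) *
            Real.exp (-c * u ^ 2) := by
        congr 1
        refine integral_congr_ae (Filter.Eventually.of_forall fun u => ?_)
        beta_reduce
        rw [← sum_factorize β u N ℓ hℓN, Finset.sum_mul]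
        refine Finset.sum_congr rfl fun σ _ => ?_
        rw [Real.exp_sub, show -c * u ^ 2 = -(c * u ^ 2) by ring, Real.exp_neg]
        ring

lemma cwCorr_eq (β : ℝ) (hβ : 0 < β) (N ℓ : ℕ) (hN1 : 1 ≤ N) (hℓN : ℓ ≤ N) :
    cwCorr β N ℓ =
      (∫ u : ℝ, Real.tanh (β * u) ^ ℓ * Real.exp ((N : ℝ) * phiCW β u)) /
      (∫ u : ℝ, Real.exp ((N : ℝ) * phiCW β u)) := by
  set c : ℝ := β * N / 2 with hcdef
  have hN0 : (0 : ℝ) < N := by exact_mod_cast hN1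
  have hc : 0 < c := by positivity
  have hk : (Real.sqrt (π / c))⁻¹ ≠ 0 := by positivity
  have hZ : cwZ β N = (Real.sqrt (π / c))⁻¹ * ∫ u : ℝ, Real.exp ((N : ℝ) * phiCW β u) := by
    have h0 := sum_weight_eq β hβ N 0 hN1 (Nat.zero_le N)
    simp only [Nat.not_lt_zero, Finset.filter_false, Finset.prod_empty, mul_one,
      pow_zero, one_mul, Nat.sub_zero] at h0
    · rw [cwZ]
      rw [show (∑ σ : Fin N → Bool, cwWeight β N σ)
        = ∑ σ : Fin N → Bool, cwWeight β N σ * ∏ j ∈ Finset.univ.filter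
            (fun j : Fin N => (j : ℕ) < 0), spin (σ j) by
          refine Finset.sum_congr rfl fun σ _ => ?_
          simp]
      rw [sum_weight_eq β hβ N 0 hN1 (Nat.zero_le N)]
      congr 1
      refine integral_congr_ae (Filter.Eventually.of_forall fun u => ?_)
      beta_reduce
      rw [exp_nphi]
      simp
  have hA : (∑ σ : Fin N → Bool, cwWeight β N σ *
        ∏ j ∈ Finset.univ.filter (fun j : Fin N => (j : ℕ) < ℓ), spin (σ j))
      = (Real.sqrt (π / c))⁻¹ *
        ∫ u : ℝ, Real.tanh (β * u) ^ ℓ * Real.exp ((N : ℝ) * phiCW β u) := by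
    rw [sum_weight_eq β hβ N ℓ hN1 hℓN]
    congr 1
    refine integral_congr_ae (Filter.Eventually.of_forall fun u => ?_)
    beta_reduce
    rw [exp_nphi]
    have hch : (0:ℝ) < 2 * Real.cosh (β * u) := two_cosh_pos _
    have hth : 2 * Real.sinh (β * u) = Real.tanh (β * u) * (2 * Real.cosh (β * u)) := by
      rw [Real.tanh_eq_sinh_div_cosh]
      field_simp
    rw [hth, mul_pow]
    rw [show tanh (β * u) ^ ℓ * (2 * cosh (β * u)) ^ ℓ * (2 * cosh (β * u)) ^ (N - ℓ)
        = tanh (β * u) ^ ℓ * ((2 * cosh (β * u)) ^ ℓ * (2 * cosh (β * u)) ^ (N - ℓ)) by ring,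
      ← pow_add, Nat.add_sub_cancel' hℓN]
    ring
  rw [cwCorr, cwExp, hA, hZ, mul_div_mul_left _ _ hk]

lemma continuous_tanh' : Continuous Real.tanh := by
  have : Real.tanh = fun x => Real.sinh x / Real.cosh x := funext Real.tanh_eq_sinh_div_cosh
  rw [this]
  exact Real.continuous_sinh.div Real.continuous_cosh fun x => (Real.cosh_pos x).ne'

lemma abs_sinh_le_cosh (y : ℝ) : |Real.sinh y| ≤ Real.cosh y := by
  have h1 := Real.cosh_sub_sinh y
  have h2 := Real.cosh_add_sinh y
  have e1 := Real.exp_pos (-y)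
  have e2 := Real.exp_pos y
  rw [abs_le]; constructor <;> nlinarith

lemma abs_tanh_le_one (y : ℝ) : |Real.tanh y| ≤ 1 := by
  rw [Real.tanh_eq_sinh_div_cosh, abs_div, abs_of_pos (Real.cosh_pos y),
    div_le_one (Real.cosh_pos y)]
  exact abs_sinh_le_cosh y

lemma tanh_lt_one' (y : ℝ) : Real.tanh y < 1 := by
  rw [Real.tanh_eq_sinh_div_cosh, div_lt_one (Real.cosh_pos y)]
  have := Real.cosh_sub_sinh y
  have := Real.exp_pos (-y)
  linarith

lemma hasDerivAt_tanh_comp (β x : ℝ) :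
    HasDerivAt (fun y => Real.tanh (β * y)) (β * (1 - Real.tanh (β * x) ^ 2)) x := by
  have hlin : HasDerivAt (fun y : ℝ => β * y) β x := by
    simpa using (hasDerivAt_id x).const_mul β
  have hs : HasDerivAt (fun y : ℝ => Real.sinh (β * y)) (Real.cosh (β * x) * β) x :=
    (Real.hasDerivAt_sinh (β * x)).comp x hlin
  have hc : HasDerivAt (fun y : ℝ => Real.cosh (β * y)) (Real.sinh (β * x) * β) x :=
    (Real.hasDerivAt_cosh (β * x)).comp x hlin
  have hd := hs.div hc (Real.cosh_pos (β * x)).ne'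
  have heq : (fun y => Real.tanh (β * y)) = fun y => Real.sinh (β * y) / Real.cosh (β * y) :=
    funext fun y => Real.tanh_eq_sinh_div_cosh (β * y)
  rw [heq]
  refine hd.congr_deriv (Eq.symm ?_)
  have hch := (Real.cosh_pos (β * x)).ne'
  have hsq := Real.cosh_sq_sub_sinh_sq (β * x)
  rw [Real.tanh_eq_sinh_div_cosh, div_pow]
  rw [show (1 : ℝ) - Real.sinh (β * x) ^ 2 / Real.cosh (β * x) ^ 2
      = (Real.cosh (β * x) ^ 2 - Real.sinh (β * x) ^ 2) / Real.cosh (β * x) ^ 2 by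
    field_simp]
  field_simp

lemma hasDerivAt_phiCW (β u : ℝ) :
    HasDerivAt (phiCW β) (β * Real.tanh (β * u) - β * u) u := by
  have hlin : HasDerivAt (fun y : ℝ => β * y) β u := by
    simpa using (hasDerivAt_id u).const_mul β
  have hc : HasDerivAt (fun y : ℝ => 2 * Real.cosh (β * y)) (2 * (Real.sinh (β * u) * β)) u :=
    ((Real.hasDerivAt_cosh (β * u)).comp u hlin).const_mul 2
  have hlog := hc.log (by positivity : (2 : ℝ) * Real.cosh (β * u) ≠ 0)
  have hq : HasDerivAt (fun y : ℝ => β / 2 * y ^ 2) (β / 2 * (2 * u)) u := by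
    simpa using (hasDerivAt_pow 2 u).const_mul (β / 2)
  have := hlog.sub hq
  refine this.congr_deriv (Eq.symm ?_)
  have hch := (Real.cosh_pos (β * u)).ne'
  rw [Real.tanh_eq_sinh_div_cosh]
  field_simp

lemma tanh_sign (β m : ℝ) (hβ : 1 < β) (hm : 0 < m)
    (hfix : Real.tanh (β * m) = m)
    (huniq : ∀ x : ℝ, 0 < x → Real.tanh (β * x) = x → x = m) :
    (∀ x, 0 < x → x < m → x < Real.tanh (β * x)) ∧
      (∀ x, m < x → Real.tanh (β * x) < x) := by
  set h : ℝ → ℝ := fun x => Real.tanh (β * x) - x with hh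
  have hcont : Continuous h := by
    exact (continuous_tanh'.comp (continuous_const.mul continuous_id)).sub continuous_id
  have hne : ∀ x, 0 < x → x ≠ m → h x ≠ 0 := by
    intro x hx hxm hzero
    exact hxm (huniq x hx (by simpa [hh, sub_eq_zero] using hzero))
  -- a point in (0, m) where h > 0
  have hd0 : HasDerivAt h (β - 1) 0 := by
    have := (hasDerivAt_tanh_comp β 0).sub (hasDerivAt_id 0); simp at this; exact this
  have hslope := hasDerivAt_iff_tendsto_slope.1 hd0
  have hev : ∀ᶠ x in 𝓝[≠] (0 : ℝ), 0 < slope h 0 x :=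
    hslope.eventually (eventually_gt_nhds (by linarith))
  have hev2 : ∀ᶠ x in 𝓝[>] (0 : ℝ), 0 < slope h 0 x :=
    nhdsWithin_mono 0 (fun x hx => ne_of_gt hx) hev
  have hev3 : ∀ᶠ x in 𝓝[>] (0 : ℝ), x < m := by
    have : Ioo (0 : ℝ) m ∈ 𝓝[>] (0 : ℝ) := Ioo_mem_nhdsGT_of_mem ⟨le_refl 0, hm⟩
    filter_upwards [this] with x hx using hx.2
  have hev4 : ∀ᶠ x in 𝓝[>] (0 : ℝ), 0 < x := self_mem_nhdsWithin
  obtain ⟨x0, hs0, hx0m, hx00⟩ := (hev2.and (hev3.and hev4)).exists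
  have hx0pos : 0 < h x0 := by
    have h0 : h 0 = 0 := by simp [hh]
    have : slope h 0 x0 = h x0 / x0 := by
      rw [slope_def_field]; simp [h0]
    rw [this] at hs0
    have := mul_pos hs0 hx00
    rwa [div_mul_cancel₀ _ (ne_of_gt hx00)] at this
  have hIVT : ∀ a b : ℝ, a < b → 0 < h a → h b < 0 → ∃ z, a < z ∧ z < b ∧ h z = 0 := by
    intro a b hab ha hb
    have := intermediate_value_Ioo' (le_of_lt hab) hcont.continuousOn
      (show (0 : ℝ) ∈ Ioo (h b) (h a) from ⟨hb, ha⟩)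
    obtain ⟨z, hz, hz0⟩ := this
    exact ⟨z, hz.1, hz.2, hz0⟩
  have hIVT' : ∀ a b : ℝ, a < b → h a < 0 → 0 < h b → ∃ z, a < z ∧ z < b ∧ h z = 0 := by
    intro a b hab ha hb
    have := intermediate_value_Ioo (le_of_lt hab) hcont.continuousOn
      (show (0 : ℝ) ∈ Ioo (h a) (h b) from ⟨ha, hb⟩)
    obtain ⟨z, hz, hz0⟩ := this
    exact ⟨z, hz.1, hz.2, hz0⟩
  have hzero_eq : ∀ z, 0 < z → h z = 0 → z = m := by
    intro z hz h0
    exact huniq z hz (by linarith [sub_eq_zero.1 h0, (sub_eq_zero.1 h0)] <;> simp)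
  constructor
  · intro x hx hxm
    by_contra hle
    push_neg at hle
    have hxneg : h x < 0 :=
      lt_of_le_of_ne (by simp only [hh]; linarith) (hne x hx (ne_of_lt hxm))
    rcases lt_trichotomy x0 x with hlt | heq | hgt
    · obtain ⟨z, hz1, hz2, hz0⟩ := hIVT x0 x hlt hx0pos hxneg
      have := hzero_eq z (lt_trans hx00 hz1) hz0
      linarith [hx0m]
    · rw [heq] at hx0pos; linarith
    · obtain ⟨z, hz1, hz2, hz0⟩ := hIVT' x x0 hgt hxneg hx0pos
      have := hzero_eq z (lt_trans hx hz1) hz0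
      linarith [hx0m]
  · intro x hmx
    by_contra hle
    push_neg at hle
    have hxpos : 0 < h x :=
      lt_of_le_of_ne (by simp only [hh]; linarith) (Ne.symm (hne x (lt_trans hm hmx) (ne_of_gt hmx)))
    set x1 : ℝ := max x 0 + 2 with hx1
    have hxx1 : x < x1 := by
      have := le_max_left x 0; simp only [hx1]; linarith
    have hx1neg : h x1 < 0 := by
      have h1 := tanh_lt_one' (β * x1)
      have : (2 : ℝ) ≤ x1 := by have := le_max_right x 0; simp only [hx1]; linarith
      simp only [hh]
      linarith
    obtain ⟨z, hz1, hz2, hz0⟩ := hIVT x x1 hxx1 hxpos hx1neg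
    have := hzero_eq z (lt_trans (lt_trans hm hmx) hz1) hz0
    linarith

lemma continuous_phiCW (β : ℝ) : Continuous (phiCW β) := by
  unfold phiCW
  refine Continuous.sub ?_ (by continuity)
  refine Continuous.log (by continuity) fun u => ne_of_gt (two_cosh_pos _)

lemma phiCW_even (β u : ℝ) : phiCW β (-u) = phiCW β u := by
  unfold phiCW
  rw [mul_neg, Real.cosh_neg, neg_pow]
  ring_nf

lemma phiCW_quad (β : ℝ) (hβ : 0 < β) (u : ℝ) :
    phiCW β u ≤ (Real.log 2 + β) - β / 4 * u ^ 2 := by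
  have h1 : Real.cosh (β * u) ≤ Real.exp |β * u| := by
    rw [Real.cosh_eq]
    have := Real.exp_le_exp.2 (le_abs_self (β * u))
    have := Real.exp_le_exp.2 (neg_le_abs (β * u))
    linarith
  have h2 : Real.log (2 * Real.cosh (β * u)) ≤ Real.log 2 + |β * u| := by
    calc Real.log (2 * Real.cosh (β * u)) ≤ Real.log (2 * Real.exp |β * u|) :=
          Real.log_le_log (two_cosh_pos _) (by linarith)
      _ = Real.log 2 + |β * u| := by rw [Real.log_mul two_ne_zero (Real.exp_ne_zero _), Real.log_exp]
  have h3 : |β * u| = β * |u| := by rw [abs_mul, abs_of_pos hβ]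
  have h4 : |u| ≤ u ^ 2 / 4 + 1 := by nlinarith [sq_nonneg (|u| - 2), sq_abs u]
  have h5 : β * |u| ≤ β * (u ^ 2 / 4 + 1) := by nlinarith
  unfold phiCW
  nlinarith

lemma phiCW_max (β m : ℝ) (hβ : 1 < β) (hm : 0 < m)
    (hfix : Real.tanh (β * m) = m)
    (huniq : ∀ x : ℝ, 0 < x → Real.tanh (β * x) = x → x = m) :
    ∀ u, 0 ≤ u → u ≠ m → phiCW β u < phiCW β m := by
  have hβ0 : (0:ℝ) < β := lt_trans one_pos hβ
  obtain ⟨hlt, hgt⟩ := tanh_sign β m hβ hm hfix huniq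
  have hmono : StrictMonoOn (phiCW β) (Set.Icc 0 m) := by
    refine strictMonoOn_of_deriv_pos (convex_Icc 0 m)
      (continuous_phiCW β).continuousOn fun u hu => ?_
    rw [interior_Icc] at hu
    rw [(hasDerivAt_phiCW β u).deriv]
    have := hlt u hu.1 hu.2
    nlinarith
  have hanti : StrictAntiOn (phiCW β) (Set.Ici m) := by
    refine strictAntiOn_of_deriv_neg (convex_Ici m)
      (continuous_phiCW β).continuousOn fun u hu => ?_
    rw [interior_Ici] at hu
    rw [(hasDerivAt_phiCW β u).deriv]
    have := hgt u hu
    nlinarith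
  intro u hu hne
  rcases lt_or_gt_of_ne hne with h | h
  · exact hmono ⟨hu, h.le⟩ ⟨hm.le, le_rfl⟩ h
  · exact hanti (Set.self_mem_Ici) (Set.mem_Ici.2 h.le) h

set_option maxHeartbeats 800000 in
lemma laplace_ratio (φ g : ℝ → ℝ) (u0 C d : ℝ) (hu0 : 0 < u0) (hd : 0 < d)
    (hφc : Continuous φ) (hgc : Continuous g) (hg1 : ∀ u, |g u| ≤ 1)
    (hφe : ∀ u, φ (-u) = φ u) (hge : ∀ u, g (-u) = g u)
    (hmax : ∀ u, 0 ≤ u → u ≠ u0 → φ u < φ u0)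
    (hquad : ∀ u, φ u ≤ C - d * u ^ 2) :
    Tendsto (fun n : ℕ => (∫ u : ℝ, g u * Real.exp (n * φ u)) / ∫ u : ℝ, Real.exp (n * φ u))
      atTop (𝓝 (g u0)) := by
  -- integrability
  have hmeas : ∀ n : ℕ, Continuous fun u => Real.exp (n * φ u) :=
    fun n => Real.continuous_exp.comp (continuous_const.mul hφc)
  have hint : ∀ n : ℕ, 1 ≤ n → Integrable (fun u => Real.exp (n * φ u)) := by
    intro n hn
    have hnd : (0 : ℝ) < n * d := by
      have : (1:ℝ) ≤ n := by exact_mod_cast hn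
      positivity
    refine Integrable.mono'
      ((integrable_exp_neg_mul_sq hnd).const_mul (Real.exp (n * C)))
      ((hmeas n).aestronglyMeasurable) (Eventually.of_forall fun u => ?_)
    rw [Real.norm_eq_abs, abs_of_pos (Real.exp_pos _), ← Real.exp_add]
    apply Real.exp_le_exp.2
    have h1 : (n:ℝ) * φ u ≤ (n:ℝ) * (C - d * u ^ 2) :=
      mul_le_mul_of_nonneg_left (hquad u) (Nat.cast_nonneg n)
    nlinarith [h1]
  have hφ1 : Integrable (fun u => Real.exp (φ u)) := by
    have := hint 1 le_rfl
    simpa using this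
  have hintg : ∀ n : ℕ, 1 ≤ n → Integrable (fun u => g u * Real.exp (n * φ u)) := by
    intro n hn
    refine Integrable.mono' (hint n hn) ((hgc.mul (hmeas n)).aestronglyMeasurable)
      (Eventually.of_forall fun u => ?_)
    rw [Real.norm_eq_abs, abs_mul, abs_of_pos (Real.exp_pos _)]
    have := hg1 u
    nlinarith [Real.exp_pos ((n:ℝ) * φ u)]
  rw [Metric.tendsto_atTop]
  intro ε hε
  set ε' : ℝ := min (ε / 4) 1 with hε'def
  have hε' : 0 < ε' := lt_min (by linarith) one_pos
  -- continuity of g at u0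
  obtain ⟨δ, hδ, hgδ⟩ := Metric.continuousAt_iff.1 hgc.continuousAt (ε := ε') hε'
  -- bad set
  set B : Set ℝ := {u | δ ≤ |u - u0| ∧ δ ≤ |u + u0|} with hBdef
  have hBclosed : IsClosed B := by
    apply IsClosed.inter
    · exact isClosed_le continuous_const ((continuous_id.sub continuous_const).abs)
    · exact isClosed_le continuous_const ((continuous_id.add continuous_const).abs)
  have hBmeas : MeasurableSet B := hBclosed.measurableSet
  have hgood : ∀ u, u ∉ B → |g u - g u0| ≤ ε' := by
    intro u hu
    simp only [hBdef, Set.mem_setOf_eq, not_and_or, not_le] at hu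
    rcases hu with hu | hu
    · exact le_of_lt (by simpa [Real.dist_eq] using hgδ (show dist u u0 < δ by simpa [Real.dist_eq] using hu))
    · have h1 : dist (-u) u0 < δ := by
        rw [Real.dist_eq]
        have : |-u - u0| = |u + u0| := by rw [show -u - u0 = -(u + u0) by ring, abs_neg]
        rw [this]; exact hu
      have := hgδ h1
      rw [hge u] at this
      exact le_of_lt (by simpa [Real.dist_eq] using this)
  -- radius R
  have hCφ : φ u0 ≤ C := by nlinarith [hquad u0, sq_nonneg u0]
  set A : ℝ := C - φ u0 + 1 with hAdef
  have hA : 0 < A := by simp only [hAdef]; linarith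
  set R : ℝ := u0 + δ + Real.sqrt (A / d) with hRdef
  have hsq : Real.sqrt (A / d) ^ 2 = A / d := Real.sq_sqrt (by positivity)
  have hR1 : u0 + δ ≤ R := by simp only [hRdef]; nlinarith [Real.sqrt_nonneg (A / d)]
  have hRpos : 0 < R := by linarith
  have hRquad : ∀ u : ℝ, R ≤ |u| → φ u ≤ φ u0 - 1 := by
    intro u hu
    have h2 : Real.sqrt (A / d) ≤ |u| := le_trans (by nlinarith) hu
    have h3 : A / d ≤ u ^ 2 := by
      calc A / d = Real.sqrt (A / d) ^ 2 := hsq.symm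
        _ ≤ |u| ^ 2 := by nlinarith [Real.sqrt_nonneg (A / d), abs_nonneg u]
        _ = u ^ 2 := sq_abs u
    have h4 : A ≤ d * u ^ 2 := by
      rw [div_le_iff₀ hd] at h3; linarith [h3]
    linarith [hquad u]
  -- max on bad set
  set K : Set ℝ := B ∩ Icc (-R) R with hKdef
  have hKcomp : IsCompact K := isCompact_Icc.inter_left hBclosed
  have hKne : K.Nonempty := by
    refine ⟨R, ⟨?_, ?_⟩, ⟨by linarith, le_refl R⟩⟩
    · rw [abs_of_nonneg (by linarith : (0:ℝ) ≤ R - u0)]; linarith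
    · rw [abs_of_nonneg (by linarith : (0:ℝ) ≤ R + u0)]; linarith
  obtain ⟨uM, hMK, hMmax⟩ := hKcomp.exists_isMaxOn hKne hφc.continuousOn
  have hMabs : φ uM = φ |uM| := by
    rcases le_or_gt 0 uM with h | h
    · rw [abs_of_nonneg h]
    · rw [abs_of_neg h, hφe]
  have huMne : |uM| ≠ u0 := by
    intro hcon
    have h1 := hMK.1.1
    have h2 := hMK.1.2
    rcases abs_eq (le_of_lt hu0) |>.1 hcon with h | h
    · rw [h] at h1; simp at h1; linarith
    · rw [h] at h2
      rw [show -u0 + u0 = (0:ℝ) by ring] at h2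
      simp at h2; linarith
  have hMlt : φ uM < φ u0 := by
    rw [hMabs]; exact hmax _ (abs_nonneg uM) huMne
  set M : ℝ := max (φ uM) (φ u0 - 1) with hMdef
  have hMlt' : M < φ u0 := max_lt hMlt (by linarith)
  have hBM : ∀ u ∈ B, φ u ≤ M := by
    intro u hu
    rcases le_or_gt |u| R with h | h
    · have : u ∈ K := ⟨hu, abs_le.1 h⟩
      exact le_trans (hMmax this) (le_max_left _ _)
    · exact le_trans (hRquad u (le_of_lt h)) (le_max_right _ _)
  set η : ℝ := (φ u0 - M) / 2 with hηdef
  have hη : 0 < η := by simp only [hηdef]; linarith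
  -- lower bound for Z via continuity of φ at u0
  obtain ⟨δ₂, hδ₂, hφδ⟩ := Metric.continuousAt_iff.1 (hφc.continuousAt (x := u0)) (ε := η) hη
  set ρ : ℝ := δ₂ / 2 with hρdef
  have hρ : 0 < ρ := by simp only [hρdef]; linarith
  have hIφ : ∀ u ∈ Icc (u0 - ρ) (u0 + ρ), φ u0 - η ≤ φ u := by
    intro u hu
    have : dist u u0 < δ₂ := by
      rw [Real.dist_eq, abs_sub_lt_iff]
      constructor
      · have := hu.2; simp only [hρdef] at this ⊢; linarith
      · have := hu.1; simp only [hρdef] at this ⊢; linarith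
    have := hφδ this
    rw [Real.dist_eq] at this
    have := abs_sub_lt_iff.1 this
    linarith [this.1, this.2]
  have hZlb : ∀ n : ℕ, 1 ≤ n →
      2 * ρ * Real.exp (n * (φ u0 - η)) ≤ ∫ u : ℝ, Real.exp (n * φ u) := by
    intro n hn
    have step1 : ∫ u in Icc (u0 - ρ) (u0 + ρ), Real.exp ((n:ℝ) * (φ u0 - η))
        ≤ ∫ u in Icc (u0 - ρ) (u0 + ρ), Real.exp ((n:ℝ) * φ u) := by
      refine setIntegral_mono_on (integrableOn_const ?_)
        ((hint n hn).integrableOn) measurableSet_Icc fun u hu => ?_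
      · rw [Real.volume_Icc]; exact ENNReal.ofReal_ne_top
      · exact Real.exp_le_exp.2 (mul_le_mul_of_nonneg_left (hIφ u hu) (Nat.cast_nonneg n))
    have step0 : ∫ u in Icc (u0 - ρ) (u0 + ρ), Real.exp ((n:ℝ) * (φ u0 - η))
        = 2 * ρ * Real.exp ((n:ℝ) * (φ u0 - η)) := by
      rw [setIntegral_const, measureReal_def, Real.volume_Icc, smul_eq_mul,
        ENNReal.toReal_ofReal (by linarith)]
      ring_nf
    have step2 : ∫ u in Icc (u0 - ρ) (u0 + ρ), Real.exp ((n:ℝ) * φ u)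
        ≤ ∫ u : ℝ, Real.exp ((n:ℝ) * φ u) :=
      setIntegral_le_integral (hint n hn) (Eventually.of_forall fun u => (Real.exp_pos _).le)
    linarith [step0 ▸ step1, step2]
  have hZpos : ∀ n : ℕ, 1 ≤ n → 0 < ∫ u : ℝ, Real.exp (n * φ u) := by
    intro n hn
    have := hZlb n hn
    have h2 : 0 < 2 * ρ * Real.exp ((n:ℝ) * (φ u0 - η)) := by positivity
    linarith
  -- constant
  set Cφ : ℝ := ∫ u : ℝ, Real.exp (φ u) with hCφdef
  have hCφ0 : 0 ≤ Cφ := integral_nonneg fun u => (Real.exp_pos _).le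
  -- tail bound
  have hTail : ∀ n : ℕ, 1 ≤ n →
      ∫ u in B, Real.exp (n * φ u) ≤ Real.exp (((n:ℝ) - 1) * M) * Cφ := by
    intro n hn
    have hn1 : (1:ℝ) ≤ (n:ℝ) := by exact_mod_cast hn
    have step1 : ∫ u in B, Real.exp ((n:ℝ) * φ u)
        ≤ ∫ u in B, Real.exp (((n:ℝ) - 1) * M) * Real.exp (φ u) := by
      refine setIntegral_mono_on ((hint n hn).integrableOn)
        ((hφ1.const_mul _).integrableOn) hBmeas fun u hu => ?_
      rw [← Real.exp_add]
      apply Real.exp_le_exp.2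
      have := hBM u hu
      nlinarith [hBM u hu]
    have step2 : ∫ u in B, Real.exp (((n:ℝ) - 1) * M) * Real.exp (φ u)
        = Real.exp (((n:ℝ) - 1) * M) * ∫ u in B, Real.exp (φ u) := by
      rw [integral_const_mul]
    have step3 : ∫ u in B, Real.exp (φ u) ≤ Cφ :=
      setIntegral_le_integral hφ1 (Eventually.of_forall fun u => (Real.exp_pos _).le)
    calc ∫ u in B, Real.exp ((n:ℝ) * φ u)
        ≤ Real.exp (((n:ℝ) - 1) * M) * ∫ u in B, Real.exp (φ u) := by rw [← step2]; exact step1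
      _ ≤ Real.exp (((n:ℝ) - 1) * M) * Cφ :=
          mul_le_mul_of_nonneg_left step3 (Real.exp_pos _).le
  -- geometric decay
  set q : ℝ := Real.exp (-η) with hqdef
  have hq0 : 0 ≤ q := (Real.exp_pos _).le
  have hq1 : q < 1 := Real.exp_lt_one_iff.2 (by linarith)
  set K0 : ℝ := Cφ / ρ * Real.exp (-M) with hK0def
  have hK00 : 0 ≤ K0 := by positivity
  have hr0 : Tendsto (fun n : ℕ => K0 * q ^ n) atTop (𝓝 0) := by
    have := (tendsto_pow_atTop_nhds_zero_of_lt_one hq0 hq1).const_mul K0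
    simpa using this
  have hev : ∀ᶠ n : ℕ in atTop, K0 * q ^ n < ε' := hr0.eventually (gt_mem_nhds hε')
  obtain ⟨n0, hn0⟩ := eventually_atTop.1 hev
  refine ⟨max n0 1, fun n hn => ?_⟩
  have hn1 : 1 ≤ n := le_trans (le_max_right n0 1) hn
  have hnn0 : n0 ≤ n := le_trans (le_max_left n0 1) hn
  set Zn : ℝ := ∫ u : ℝ, Real.exp (n * φ u) with hZndef
  set An : ℝ := ∫ u : ℝ, g u * Real.exp (n * φ u) with hAndef
  have hZn : 0 < Zn := hZpos n hn1
  -- numerator identity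
  have h1 : An - g u0 * Zn = ∫ u : ℝ, (g u - g u0) * Real.exp (n * φ u) := by
    have heq : (fun u : ℝ => (g u - g u0) * Real.exp (n * φ u))
        = fun u : ℝ => g u * Real.exp (n * φ u) - g u0 * Real.exp (n * φ u) := by
      funext u; ring
    rw [heq, integral_sub (hintg n hn1) ((hint n hn1).const_mul _), integral_const_mul]
  have habsint : Integrable (fun u : ℝ => |g u - g u0| * Real.exp (n * φ u)) := by
    refine Integrable.mono' ((hint n hn1).const_mul 2)
      (((hgc.sub continuous_const).abs.mul (hmeas n)).aestronglyMeasurable)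
      (Eventually.of_forall fun u => ?_)
    rw [Real.norm_eq_abs, abs_mul, abs_abs, abs_of_pos (Real.exp_pos _)]
    have h2 : |g u - g u0| ≤ 2 := by
      have := hg1 u; have := hg1 u0
      calc |g u - g u0| ≤ |g u| + |g u0| := abs_sub _ _
        _ ≤ 2 := by linarith
    exact mul_le_mul_of_nonneg_right h2 (Real.exp_pos _).le
  have h2 : |An - g u0 * Zn| ≤ ∫ u : ℝ, |g u - g u0| * Real.exp (n * φ u) := by
    rw [h1]
    have := norm_integral_le_integral_norm (μ := volume)
      (f := fun u : ℝ => (g u - g u0) * Real.exp (n * φ u))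
    simp only [Real.norm_eq_abs] at this
    refine le_trans this (le_of_eq (integral_congr_ae (Eventually.of_forall fun u => ?_)))
    beta_reduce
    rw [abs_mul, abs_of_pos (Real.exp_pos _)]
  have h3 : ∫ u : ℝ, |g u - g u0| * Real.exp (n * φ u)
      = (∫ u in B, |g u - g u0| * Real.exp (n * φ u))
        + ∫ u in Bᶜ, |g u - g u0| * Real.exp (n * φ u) :=
    (integral_add_compl hBmeas habsint).symm
  have h4 : ∫ u in B, |g u - g u0| * Real.exp (n * φ u)
      ≤ 2 * (Real.exp (((n:ℝ) - 1) * M) * Cφ) := by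
    have s1 : ∫ u in B, |g u - g u0| * Real.exp (n * φ u)
        ≤ ∫ u in B, 2 * Real.exp (n * φ u) := by
      refine setIntegral_mono_on habsint.integrableOn
        (((hint n hn1).const_mul 2).integrableOn) hBmeas fun u _ => ?_
      have h2 : |g u - g u0| ≤ 2 := by
        have := hg1 u; have := hg1 u0
        calc |g u - g u0| ≤ |g u| + |g u0| := abs_sub _ _
          _ ≤ 2 := by linarith
      exact mul_le_mul_of_nonneg_right h2 (Real.exp_pos _).le
    rw [integral_const_mul] at s1
    exact le_trans s1 (mul_le_mul_of_nonneg_left (hTail n hn1) (by norm_num))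
  have h5 : ∫ u in Bᶜ, |g u - g u0| * Real.exp (n * φ u) ≤ ε' * Zn := by
    have s1 : ∫ u in Bᶜ, |g u - g u0| * Real.exp (n * φ u)
        ≤ ∫ u in Bᶜ, ε' * Real.exp (n * φ u) := by
      refine setIntegral_mono_on habsint.integrableOn
        (((hint n hn1).const_mul ε').integrableOn) hBmeas.compl fun u hu => ?_
      exact mul_le_mul_of_nonneg_right (hgood u hu) (Real.exp_pos _).le
    rw [integral_const_mul] at s1
    refine le_trans s1 (mul_le_mul_of_nonneg_left ?_ hε'.le)
    exact setIntegral_le_integral (hint n hn1) (Eventually.of_forall fun u => (Real.exp_pos _).le)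
  have hkey : |An - g u0 * Zn| ≤ 2 * (Real.exp (((n:ℝ) - 1) * M) * Cφ) + ε' * Zn := by
    rw [h3] at h2; linarith
  -- exponential identity
  have hM2η : φ u0 - 2 * η = M := by simp only [hηdef]; ring
  have e1 : Real.exp (-M) * Real.exp ((n:ℝ) * (-η)) * Real.exp ((n:ℝ) * (φ u0 - η))
      = Real.exp (((n:ℝ) - 1) * M) := by
    rw [← Real.exp_add, ← Real.exp_add]
    congr 1
    linear_combination (n:ℝ) * hM2η
  have hident : K0 * q ^ n * (2 * ρ * Real.exp ((n:ℝ) * (φ u0 - η)))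
      = 2 * (Real.exp (((n:ℝ) - 1) * M) * Cφ) := by
    have hq2 : q ^ n = Real.exp ((n:ℝ) * (-η)) := (Real.exp_nat_mul _ n).symm
    rw [hq2, hK0def]
    rw [show Cφ / ρ * Real.exp (-M) * Real.exp ((n:ℝ) * (-η))
          * (2 * ρ * Real.exp ((n:ℝ) * (φ u0 - η)))
        = 2 * ((Real.exp (-M) * Real.exp ((n:ℝ) * (-η)) * Real.exp ((n:ℝ) * (φ u0 - η)))
          * (Cφ / ρ * ρ)) by ring, e1, div_mul_cancel₀ _ (ne_of_gt hρ)]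
  have term1 : 2 * (Real.exp (((n:ℝ) - 1) * M) * Cφ) / Zn ≤ K0 * q ^ n := by
    rw [div_le_iff₀ hZn]
    calc 2 * (Real.exp (((n:ℝ) - 1) * M) * Cφ)
        = K0 * q ^ n * (2 * ρ * Real.exp ((n:ℝ) * (φ u0 - η))) := hident.symm
      _ ≤ K0 * q ^ n * Zn :=
          mul_le_mul_of_nonneg_left (hZlb n hn1) (by positivity)
  -- conclusion
  have hdist : dist (An / Zn) (g u0) = |An - g u0 * Zn| / Zn := by
    rw [Real.dist_eq, show An / Zn - g u0 = (An - g u0 * Zn) / Zn by field_simp,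
      abs_div, abs_of_pos hZn]
  rw [hdist]
  have hb1 : |An - g u0 * Zn| / Zn
      ≤ (2 * (Real.exp (((n:ℝ) - 1) * M) * Cφ) + ε' * Zn) / Zn :=
    (div_le_div_iff_of_pos_right hZn).2 hkey
  have hb2 : (2 * (Real.exp (((n:ℝ) - 1) * M) * Cφ) + ε' * Zn) / Zn
      = 2 * (Real.exp (((n:ℝ) - 1) * M) * Cφ) / Zn + ε' := by
    rw [add_div, mul_div_assoc]
    congr 1
    exact mul_div_cancel_right₀ ε' (ne_of_gt hZn)
  have hfin := hn0 n hnn0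
  have hεq : ε' ≤ ε / 4 := min_le_left _ _
  calc |An - g u0 * Zn| / Zn
      ≤ 2 * (Real.exp (((n:ℝ) - 1) * M) * Cφ) / Zn + ε' := by rw [← hb2]; exact hb1
    _ ≤ K0 * q ^ n + ε' := by linarith [term1]
    _ < ε' + ε' := by linarith
    _ < ε := by linarith

end CWAux

/-- Asymptotics of supercritical Curie–Weiss correlations: for `β > 1` and even `ℓ ≥ 2`,
`E_{β,N}(X_1 ⋯ X_ℓ) → m(β)^ℓ`, where `m(β) > 0` is the unique positive solution of
`x = tanh (β x)`. -/
theorem cw_corr_supercritical (β : ℝ) (hβ : 1 < β)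
    (m : ℝ) (hm : 0 < m) (hm_fix : Real.tanh (β * m) = m)
    (hm_unique : ∀ x : ℝ, 0 < x → Real.tanh (β * x) = x → x = m)
    (ℓ : ℕ) (hℓ : Even ℓ) (hℓ2 : 2 ≤ ℓ) :
    Tendsto (fun N : ℕ => cwCorr β N ℓ) atTop (𝓝 (m ^ ℓ)) := by
  have hβ0 : (0:ℝ) < β := lt_trans one_pos hβ
  have hgc : Continuous fun u : ℝ => Real.tanh (β * u) ^ ℓ :=
    (continuous_tanh'.comp (continuous_const.mul continuous_id)).pow ℓ
  have hg1 : ∀ u : ℝ, |Real.tanh (β * u) ^ ℓ| ≤ 1 := by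
    intro u
    rw [abs_pow]
    exact pow_le_one₀ (abs_nonneg _) (abs_tanh_le_one _)
  have hge : ∀ u : ℝ, Real.tanh (β * (-u)) ^ ℓ = Real.tanh (β * u) ^ ℓ := by
    intro u
    rw [mul_neg, Real.tanh_neg, hℓ.neg_pow]
  have hlim := laplace_ratio (phiCW β) (fun u => Real.tanh (β * u) ^ ℓ) m
    (Real.log 2 + β) (β / 4) hm (by positivity) (continuous_phiCW β) hgc hg1
    (phiCW_even β) hge (phiCW_max β m hβ hm hm_fix hm_unique) (phiCW_quad β hβ0)
  rw [hm_fix] at hlim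
  refine hlim.congr' ?_
  rw [Filter.eventuallyEq_iff_exists_mem]
  refine ⟨{N : ℕ | max ℓ 1 ≤ N}, mem_atTop _, fun N hN => ?_⟩
  have h1 : 1 ≤ N := le_trans (le_max_right ℓ 1) hN
  have h2 : ℓ ≤ N := le_trans (le_max_left ℓ 1) hN
  exact (cwCorr_eq β hβ0 N ℓ h1 h2).symm
end

section
/- Moment convergence for the magnetization, subcritical/critical case: fix 0 ≤ β ≤ 1 and an integer K ≥ 1. For each N let X_1,…,X_N be CW(β,N)-distributed and S_N = ∑_{i=1}^N X_i. Then E_{β,N}((S_N/N)^K) → 0 as N → ∞. -/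
open MeasureTheory Filter Real Topology ENNReal

section CWAux
open Finset

noncomputable def cnt {N : ℕ} (σ : Fin N → Bool) : ℕ := (univ.filter (fun i => σ i = true)).card

noncomputable def gfun (m : ℝ) : ℝ :=
  (1+m)/2 * Real.log (1+m) + (1-m)/2 * Real.log (1-m) - m^2/2

noncomputable def phifun (m : ℝ) : ℝ := Real.log (1+m) - Real.log (1-m) - 2*m

theorem group_lemma (N : ℕ) (F : ℕ → ℝ) :
    ∑ σ : Fin N → Bool, F (cnt σ) = ∑ k ∈ range (N+1), (N.choose k : ℝ) * F k := by
  classical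
  have hbij : Function.Bijective (fun σ : Fin N → Bool => univ.filter (fun i => σ i = true)) := by
    constructor
    · intro σ τ h
      funext i
      have := Finset.ext_iff.mp h i
      simp only [mem_filter, mem_univ, true_and] at this
      cases hσ : σ i <;> cases hτ : τ i <;> simp_all
    · intro A
      refine ⟨fun i => decide (i ∈ A), ?_⟩
      ext i; simp
  have h1 : ∑ σ : Fin N → Bool, F (cnt σ) = ∑ A : Finset (Fin N), F A.card :=
    Fintype.sum_bijective _ hbij (fun σ => F (cnt σ)) (fun A => F A.card) (fun σ => rfl)
  rw [h1]
  have h2 : (univ : Finset (Finset (Fin N))) = (univ : Finset (Fin N)).powerset :=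
    (Finset.powerset_univ).symm
  rw [h2, Finset.powerset_card_disjiUnion]
  erw [Finset.sum_disjiUnion]
  rw [Finset.card_univ, Fintype.card_fin]
  refine Finset.sum_congr rfl fun k hk => ?_
  rw [Finset.sum_congr rfl (fun A hA => by
    rw [(Finset.mem_powersetCard.mp hA).2]), Finset.sum_const, Finset.card_powersetCard,
    Finset.card_univ, Fintype.card_fin, nsmul_eq_mul]

theorem sum_spin {N : ℕ} (σ : Fin N → Bool) :
    ∑ i, spin (σ i) = 2 * (cnt σ : ℝ) - N := by
  classical
  have : ∀ i, spin (σ i) = 2 * (if σ i = true then (1:ℝ) else 0) - 1 := by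
    intro i; cases h : σ i <;> simp [spin] <;> norm_num
  rw [Finset.sum_congr rfl (fun i _ => this i)]
  rw [Finset.sum_sub_distrib, ← Finset.mul_sum, Finset.sum_boole, Finset.sum_const]
  simp [cnt]


theorem choose_le_exp_entropy (N k : ℕ) (hk : k ≤ N) (hN : 0 < N) :
    (N.choose k : ℝ) ≤ Real.exp (N * (-(((k:ℝ)/N) * Real.log ((k:ℝ)/N)) - (1 - (k:ℝ)/N) * Real.log (1 - (k:ℝ)/N))) := by
  have hNpos : (0:ℝ) < N := by exact_mod_cast hN
  rcases Nat.eq_zero_or_pos k with hk0 | hkpos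
  · subst hk0; simp
  rcases eq_or_lt_of_le hk with hkN | hkN
  · subst hkN
    rw [div_self (ne_of_gt hNpos)]
    simp
  set p : ℝ := (k : ℝ) / N with hp
  have hppos : 0 < p := by positivity
  have hplt : p < 1 := by rw [hp, div_lt_one hNpos]; exact_mod_cast hkN
  have hq : 0 < 1 - p := by linarith
  have key : (N.choose k : ℝ) * (p ^ k * (1 - p) ^ (N - k)) ≤ 1 := by
    have hsum : ∑ j ∈ range (N+1), p ^ j * (1-p) ^ (N - j) * (N.choose j : ℝ) = 1 := by
      rw [← add_pow]; norm_num
    calc (N.choose k : ℝ) * (p ^ k * (1 - p) ^ (N - k))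
        = p ^ k * (1-p) ^ (N - k) * (N.choose k : ℝ) := by ring
      _ ≤ ∑ j ∈ range (N+1), p ^ j * (1-p) ^ (N - j) * (N.choose j : ℝ) := by
          refine Finset.single_le_sum (f := fun j => p ^ j * (1-p) ^ (N - j) * (N.choose j : ℝ))
            (fun j _ => by positivity) (by simp [Nat.lt_succ_of_le hk])
      _ = 1 := hsum
  have hkN' : ((N - k : ℕ) : ℝ) = N * (1 - p) := by
    rw [Nat.cast_sub hk, hp]; field_simp
  have hk' : (k : ℝ) = N * p := by rw [hp]; field_simp
  have hexp : p ^ k * (1 - p) ^ (N - k) = Real.exp (N * (p * Real.log p + (1-p) * Real.log (1-p))) := by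
    rw [← Real.exp_log (mul_pos (pow_pos hppos k) (pow_pos hq (N-k))),
      Real.log_mul (by positivity) (by positivity), Real.log_pow, Real.log_pow]
    congr 1
    rw [show ((N - k : ℕ) : ℝ) * Real.log (1-p) = (N * (1 - p)) * Real.log (1-p) by rw [hkN']]
    rw [show ((k : ℕ) : ℝ) * Real.log p = (N * p) * Real.log p by rw [← hk']]
    ring
  have hpow : 0 < p ^ k * (1 - p) ^ (N - k) := by rw [hexp]; positivity
  have h2 : (N.choose k : ℝ) ≤ 1 / (p ^ k * (1 - p) ^ (N - k)) :=
    (le_div_iff₀ hpow).mpr key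
  calc (N.choose k : ℝ) ≤ 1 / (p ^ k * (1 - p) ^ (N - k)) := h2
    _ = Real.exp (N * (-(p * Real.log p) - (1 - p) * Real.log (1 - p))) := by
        rw [hexp, one_div, ← Real.exp_neg]; congr 1; ring

theorem gfun_hasDeriv {m : ℝ} (h1 : -1 < m) (h2 : m < 1) :
    HasDerivAt gfun ((Real.log (1+m) - Real.log (1-m))/2 - m) m := by
  have hp : (0:ℝ) < 1 + m := by linarith
  have hq : (0:ℝ) < 1 - m := by linarith
  have d1 : HasDerivAt (fun m : ℝ => (1+m)/2 * Real.log (1+m))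
      ((1/2) * Real.log (1+m) + (1+m)/2 * (1/(1+m))) m := by
    have ha : HasDerivAt (fun m : ℝ => (1+m)/2) (1/2) m := by
      simpa using ((hasDerivAt_id m).const_add 1).div_const 2
    have hb : HasDerivAt (fun m : ℝ => Real.log (1+m)) (1/(1+m)) m := by
      simpa [Function.comp_def] using (Real.hasDerivAt_log hp.ne').comp m ((hasDerivAt_id m).const_add 1)
    exact ha.mul hb
  have d2 : HasDerivAt (fun m : ℝ => (1-m)/2 * Real.log (1-m))
      ((-(1/2)) * Real.log (1-m) + (1-m)/2 * (-(1/(1-m)))) m := by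
    have ha : HasDerivAt (fun m : ℝ => (1-m)/2) (-(1/2)) m := by
      have : HasDerivAt (fun x : ℝ => (1 + -x)/2) (-1/2) m := by
        simpa using ((hasDerivAt_id m).neg.const_add 1).div_const 2
      convert this using 1 <;> first
        | (funext x; ring)
        | norm_num
    have hb : HasDerivAt (fun m : ℝ => Real.log (1-m)) (-(1/(1-m))) m := by
      have h := (Real.hasDerivAt_log (by rw [← sub_eq_add_neg]; exact hq.ne' : (1 + -m) ≠ 0)).comp m ((hasDerivAt_id m).neg.const_add 1)
      have h2 : HasDerivAt (fun m : ℝ => Real.log (1 + -m)) (-(1/(1+ -m))) m := by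
        convert h using 1 <;> first | rfl | ring
      convert h2 using 1 <;> first
        | (funext x; ring)
        | ring
    exact ha.mul hb
  have d3 : HasDerivAt (fun m : ℝ => m^2/2) m m := by
    simpa using (hasDerivAt_pow 2 m).div_const 2
  have := (d1.add d2).sub d3
  convert this using 1 <;> first | rfl | (field_simp; ring)


theorem phifun_hasDeriv {m : ℝ} (h1 : -1 < m) (h2 : m < 1) :
    HasDerivAt phifun (1/(1+m) + 1/(1-m) - 2) m := by
  have hp : (0:ℝ) < 1 + m := by linarith
  have hq : (0:ℝ) < 1 - m := by linarith
  have hb1 : HasDerivAt (fun m : ℝ => Real.log (1+m)) (1/(1+m)) m := by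
    simpa [Function.comp_def] using (Real.hasDerivAt_log hp.ne').comp m ((hasDerivAt_id m).const_add 1)
  have hb2 : HasDerivAt (fun m : ℝ => Real.log (1-m)) (-(1/(1-m))) m := by
    have h := (Real.hasDerivAt_log (by rw [← sub_eq_add_neg]; exact hq.ne' : (1 + -m) ≠ 0)).comp m
      ((hasDerivAt_id m).neg.const_add 1)
    have h2 : HasDerivAt (fun m : ℝ => Real.log (1 + -m)) (-(1/(1+ -m))) m := by
      convert h using 1 <;> first | rfl | ring
    convert h2 using 1 <;> first
      | (funext x; ring)
      | ring
  have hc : HasDerivAt (fun m : ℝ => 2*m) 2 m := by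
    simpa using (hasDerivAt_id m).const_mul 2
  have := (hb1.sub hb2).sub hc
  convert this using 1 <;> first | rfl | ring


theorem continuousOn_phifun : ContinuousOn phifun (Set.Ico 0 1) := by
  intro x hx
  exact ((phifun_hasDeriv (by linarith [hx.1] : (-1:ℝ) < x) hx.2).continuousAt).continuousWithinAt


theorem phifun_pos {m : ℝ} (h1 : 0 < m) (h2 : m < 1) : 0 < phifun m := by
  have hmono : StrictMonoOn phifun (Set.Ico 0 1) := by
    apply strictMonoOn_of_deriv_pos (convex_Ico 0 1) continuousOn_phifun
    intro x hx
    rw [interior_Ico] at hx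
    rw [(phifun_hasDeriv (by linarith [hx.1] : (-1:ℝ) < x) hx.2).deriv]
    have hp : (0:ℝ) < 1 + x := by linarith [hx.1]
    have hq : (0:ℝ) < 1 - x := by linarith [hx.2]
    rw [div_add_div _ _ hp.ne' hq.ne', sub_pos]
    rw [lt_div_iff₀ (by positivity)]
    nlinarith [sq_nonneg x, hx.1]
  have h0 : phifun 0 = 0 := by simp [phifun]
  have := hmono (Set.mem_Ico.mpr ⟨le_refl 0, one_pos⟩) (Set.mem_Ico.mpr ⟨h1.le, h2⟩) h1
  rwa [h0] at this


theorem gfun_zero : gfun 0 = 0 := by simp [gfun]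


theorem continuousOn_gfun : ContinuousOn gfun (Set.Ico 0 1) := by
  intro x hx
  exact ((gfun_hasDeriv (by linarith [hx.1] : (-1:ℝ) < x) hx.2).continuousAt).continuousWithinAt


theorem gfun_pos {m : ℝ} (h1 : 0 < m) (h2 : m ≤ 1) : 0 < gfun m := by
  rcases eq_or_lt_of_le h2 with h2 | h2
  · subst h2
    have : gfun 1 = Real.log 2 - 1/2 := by
      simp [gfun]
      norm_num
    rw [this]
    have := Real.log_two_gt_d9
    linarith
  have hmono : StrictMonoOn gfun (Set.Ico 0 1) := by
    apply strictMonoOn_of_deriv_pos (convex_Ico 0 1) continuousOn_gfun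
    intro x hx
    rw [interior_Ico] at hx
    rw [(gfun_hasDeriv (by linarith [hx.1] : (-1:ℝ) < x) hx.2).deriv]
    have := phifun_pos hx.1 hx.2
    unfold phifun at this
    linarith
  have := hmono (Set.mem_Ico.mpr ⟨le_refl 0, one_pos⟩) (Set.mem_Ico.mpr ⟨h1.le, h2⟩) h1
  rwa [gfun_zero] at this


theorem gfun_even (m : ℝ) : gfun (-m) = gfun m := by
  unfold gfun; ring_nf


theorem continuous_gfun : Continuous gfun := by
  have : gfun = fun m => ((1+m) * Real.log (1+m))/2 + ((1-m) * Real.log (1-m))/2 - m^2/2 := by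
    funext m; unfold gfun; ring
  rw [this]
  have c1 : Continuous fun m : ℝ => (1+m) * Real.log (1+m) :=
    Real.continuous_mul_log.comp (continuous_const.add continuous_id)
  have c2 : Continuous fun m : ℝ => (1-m) * Real.log (1-m) :=
    Real.continuous_mul_log.comp (continuous_const.sub continuous_id)
  fun_prop


theorem gfun_unif_min (ε : ℝ) (hε : 0 < ε) (hε1 : ε ≤ 1) :
    ∃ c > 0, ∀ m : ℝ, ε ≤ |m| → |m| ≤ 1 → c ≤ gfun m := by
  have hcpt : IsCompact (Set.Icc ε 1) := isCompact_Icc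
  have hne : (Set.Icc ε 1).Nonempty := Set.nonempty_Icc.mpr hε1
  obtain ⟨m₀, hm₀, hmin⟩ := hcpt.exists_isMinOn hne continuous_gfun.continuousOn
  refine ⟨gfun m₀, gfun_pos (lt_of_lt_of_le hε hm₀.1) hm₀.2, fun m hm1 hm2 => ?_⟩
  have habs : gfun m = gfun |m| := by
    rcases abs_choice m with h | h
    · rw [h]
    · rw [h, gfun_even]
  rw [habs]
  exact hmin (Set.mem_Icc.mpr ⟨hm1, hm2⟩)

theorem entropy_identity (p : ℝ) :
    -(p * Real.log p) - (1-p) * Real.log (1-p)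
      = Real.log 2 - gfun (2*p - 1) - (2*p-1)^2/2 := by
  unfold gfun
  have e1 : (1 + (2*p - 1)) = 2 * p := by ring
  have e2 : (1 - (2*p - 1)) = 2 * (1 - p) := by ring
  rw [e1, e2]
  rcases eq_or_ne p 0 with hp | hp
  · subst hp; simp
  rcases eq_or_ne p 1 with hp1 | hp1
  · subst hp1; simp
  rw [Real.log_mul two_ne_zero hp, Real.log_mul two_ne_zero (by intro h; apply hp1; linarith)]
  ring

theorem level_bound (β : ℝ) (hβ0 : 0 ≤ β) (hβ1 : β ≤ 1) (N k : ℕ) (hN : 0 < N) (hk : k ≤ N)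
    (c : ℝ) (hcle : c ≤ gfun ((2*(k:ℝ) - N)/N)) :
    (N.choose k : ℝ) * Real.exp (β/(2*N) * (2*(k:ℝ) - N)^2) ≤ 2^N * Real.exp (-(N*c)) := by
  have hNpos : (0:ℝ) < N := by exact_mod_cast hN
  set m : ℝ := (2*(k:ℝ) - N)/N with hm
  have hmN : (2*(k:ℝ) - N) = m * N := by rw [hm]; field_simp
  have hp : m = 2*((k:ℝ)/N) - 1 := by rw [hm]; field_simp
  have h1 : β/(2*N) * (2*(k:ℝ)-N)^2 ≤ N * m^2/2 := by
    rw [hmN]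
    have : β/(2*N) * (m*N)^2 = β * (N * m^2/2) := by field_simp
    rw [this]
    nlinarith [sq_nonneg m, hNpos]
  have h2 := choose_le_exp_entropy N k hk hN
  rw [show (-(((k:ℝ)/N) * Real.log ((k:ℝ)/N)) - (1 - (k:ℝ)/N) * Real.log (1 - (k:ℝ)/N))
      = Real.log 2 - gfun m - m^2/2 by rw [entropy_identity ((k:ℝ)/N), ← hp]] at h2
  calc (N.choose k : ℝ) * Real.exp (β/(2*N) * (2*(k:ℝ) - N)^2)
      ≤ Real.exp (N * (Real.log 2 - gfun m - m^2/2)) * Real.exp (N * m^2/2) := by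
        apply mul_le_mul h2 (Real.exp_le_exp.mpr h1) (Real.exp_pos _).le (Real.exp_pos _).le
    _ = Real.exp (N * Real.log 2 - N * gfun m) := by rw [← Real.exp_add]; ring_nf
    _ ≤ Real.exp (N * Real.log 2 + -(N*c)) := by
        apply Real.exp_le_exp.mpr
        have : (N:ℝ) * c ≤ N * gfun m := by
          apply mul_le_mul_of_nonneg_left hcle hNpos.le
        linarith
    _ = 2^N * Real.exp (-(N*c)) := by
        rw [Real.exp_add]
        congr 1
        rw [← Real.log_pow, Real.exp_log (by positivity)]


theorem main_bound (β ε c : ℝ) (hβ0 : 0 ≤ β) (hβ1 : β ≤ 1) (hε : 0 < ε) (hε1 : ε ≤ 1)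
    (hc : 0 < c) (hcε : ∀ m : ℝ, ε ≤ |m| → |m| ≤ 1 → c ≤ gfun m)
    (K N : ℕ) (hK : 1 ≤ K) (hN : 1 ≤ N) :
    |cwExp β N (fun σ => ((∑ i, spin (σ i)) / N) ^ K)| ≤ ε + (N+1) * Real.exp (-(N*c)) := by
  classical
  have hNpos : (0:ℝ) < N := by exact_mod_cast hN
  -- magnetization of σ
  set M : (Fin N → Bool) → ℝ := fun σ => (∑ i, spin (σ i)) / N with hM
  have hMabs : ∀ σ, |M σ| ≤ 1 := by
    intro σ
    rw [hM]
    rw [abs_div, abs_of_pos hNpos, div_le_one hNpos]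
    calc |∑ i, spin (σ i)| ≤ ∑ i, |spin (σ i)| := Finset.abs_sum_le_sum_abs _ _
      _ = ∑ i : Fin N, (1:ℝ) := by
          refine Finset.sum_congr rfl fun i _ => ?_
          cases h : σ i <;> simp [spin]
      _ = N := by simp
  -- indicator
  set χ : (Fin N → Bool) → ℝ := fun σ => if ε < |M σ| then 1 else 0 with hχ
  have hpt : ∀ σ, |(M σ) ^ K| ≤ ε + χ σ := by
    intro σ
    rw [abs_pow, hχ]
    by_cases h : ε < |M σ|
    · simp only [h, if_pos]
      calc |M σ| ^ K ≤ 1 ^ K := pow_le_pow_left₀ (abs_nonneg _) (hMabs σ) K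
        _ = 1 := one_pow K
        _ ≤ ε + 1 := by linarith
    · simp only [h, if_neg, if_false, add_zero]
      push_neg at h
      calc |M σ| ^ K ≤ ε ^ K := pow_le_pow_left₀ (abs_nonneg _) h K
        _ ≤ ε ^ 1 := pow_le_pow_of_le_one hε.le hε1 hK
        _ = ε := pow_one ε
  -- positivity of Z and lower bound
  have hZpos : 0 < cwZ β N :=
    Finset.sum_pos (fun σ _ => Real.exp_pos _) ⟨fun _ => true, Finset.mem_univ _⟩
  have hZge : (2:ℝ)^N ≤ cwZ β N := by
    have : ∀ σ : Fin N → Bool, (1:ℝ) ≤ cwWeight β N σ := by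
      intro σ
      rw [cwWeight, ← Real.exp_zero]
      apply Real.exp_le_exp.mpr
      positivity
    calc (2:ℝ)^N = ∑ _σ : Fin N → Bool, (1:ℝ) := by
          simp [Finset.card_univ]
      _ ≤ ∑ σ : Fin N → Bool, cwWeight β N σ := Finset.sum_le_sum (fun σ _ => this σ)
  -- bound on ∑ w χ
  have hwχ : ∑ σ : Fin N → Bool, cwWeight β N σ * χ σ ≤ (N+1) * (2^N * Real.exp (-(N*c))) := by
    have hgrp : ∑ σ : Fin N → Bool, cwWeight β N σ * χ σ
        = ∑ k ∈ Finset.range (N+1), (N.choose k : ℝ) *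
          (Real.exp (β/(2*N) * (2*(k:ℝ) - N)^2) *
            (if ε < |(2*(k:ℝ) - N)/N| then 1 else 0)) := by
      rw [← group_lemma N (fun k => Real.exp (β/(2*N) * (2*(k:ℝ) - N)^2) *
          (if ε < |(2*(k:ℝ) - N)/N| then 1 else 0))]
      refine Finset.sum_congr rfl fun σ _ => ?_
      have hs := sum_spin σ
      simp only [cwWeight, hχ, hM, hs]
    rw [hgrp]
    calc ∑ k ∈ Finset.range (N+1), (N.choose k : ℝ) *
          (Real.exp (β/(2*N) * (2*(k:ℝ) - N)^2) * (if ε < |(2*(k:ℝ) - N)/N| then 1 else 0))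
        ≤ ∑ _k ∈ Finset.range (N+1), 2^N * Real.exp (-(N*c)) := by
          refine Finset.sum_le_sum fun k hk => ?_
          have hkN : k ≤ N := Nat.lt_succ_iff.mp (Finset.mem_range.mp hk)
          by_cases h : ε < |(2*(k:ℝ) - N)/N|
          · rw [if_pos h, mul_one]
            apply level_bound β hβ0 hβ1 N k (by omega) hkN c
            apply hcε _ h.le
            -- |(2k-N)/N| ≤ 1
            rw [abs_div, abs_of_pos hNpos, div_le_one hNpos, abs_le]
            constructor
            · have : (0:ℝ) ≤ (k:ℝ) := Nat.cast_nonneg k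
              linarith
            · have : (k:ℝ) ≤ N := by exact_mod_cast hkN
              linarith
          · rw [if_neg h, mul_zero, mul_zero]
            positivity
      _ = (N+1) * (2^N * Real.exp (-(N*c))) := by
          rw [Finset.sum_const, Finset.card_range, nsmul_eq_mul]
          push_cast
          ring
  -- assemble
  rw [cwExp, abs_div, abs_of_pos hZpos, div_le_iff₀ hZpos]
  calc |∑ σ : Fin N → Bool, cwWeight β N σ * (M σ)^K|
      ≤ ∑ σ : Fin N → Bool, |cwWeight β N σ * (M σ)^K| := Finset.abs_sum_le_sum_abs _ _
    _ ≤ ∑ σ : Fin N → Bool, cwWeight β N σ * (ε + χ σ) := by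
        refine Finset.sum_le_sum fun σ _ => ?_
        have hw : 0 < cwWeight β N σ := by rw [cwWeight]; exact Real.exp_pos _
        rw [abs_mul, abs_of_pos hw]
        exact mul_le_mul_of_nonneg_left (hpt σ) hw.le
    _ = ε * cwZ β N + ∑ σ : Fin N → Bool, cwWeight β N σ * χ σ := by
        rw [cwZ, Finset.mul_sum, ← Finset.sum_add_distrib]
        refine Finset.sum_congr rfl fun σ _ => ?_
        ring
    _ ≤ ε * cwZ β N + (N+1) * (2^N * Real.exp (-(N*c))) := by linarith
    _ ≤ (ε + (N+1) * Real.exp (-(N*c))) * cwZ β N := by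
        have h1 : ((N:ℝ)+1) * (2^N * Real.exp (-(N*c)))
            ≤ ((N:ℝ)+1) * Real.exp (-(N*c)) * cwZ β N := by
          calc ((N:ℝ)+1) * (2^N * Real.exp (-(N*c)))
              = ((N:ℝ)+1) * Real.exp (-(N*c)) * 2^N := by ring
            _ ≤ ((N:ℝ)+1) * Real.exp (-(N*c)) * cwZ β N := by
                apply mul_le_mul_of_nonneg_left hZge
                positivity
        linarith [h1]


theorem htend_aux (c : ℝ) (hc : 0 < c) :
    Tendsto (fun N : ℕ => ((N:ℝ)+1) * Real.exp (-(N*c))) atTop (𝓝 0) := by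
  have hbase : Tendsto (fun x : ℝ => (1/c)*(x^1*Real.exp (-x)) + Real.exp (-x)) atTop
      (𝓝 ((1/c)*0+0)) :=
    ((Real.tendsto_pow_mul_exp_neg_atTop_nhds_zero 1).const_mul (1/c)).add
      Real.tendsto_exp_neg_atTop_nhds_zero
  have hcomp : Tendsto (fun N : ℕ => (N:ℝ)*c) atTop atTop :=
    (tendsto_natCast_atTop_atTop).atTop_mul_const hc
  have h := hbase.comp hcomp
  have heq : ∀ N : ℕ, ((fun x : ℝ => (1/c)*(x^1*Real.exp (-x)) + Real.exp (-x)) ∘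
      (fun N : ℕ => (N:ℝ)*c)) N = ((N:ℝ)+1)*Real.exp (-(N*c)) := by
    intro N
    simp only [Function.comp_apply, pow_one]
    field_simp
  have h2 := h.congr heq
  simpa using h2


end CWAux

/-- Moment convergence for the magnetization, subcritical/critical case: for
`0 ≤ β ≤ 1` and `K ≥ 1`, `E_{β,N}((S_N/N)^K) → 0` as `N → ∞`. -/
theorem cw_magnetization_moments_subcritical (β : ℝ) (hβ0 : 0 ≤ β) (hβ1 : β ≤ 1)
    (K : ℕ) (hK : 1 ≤ K) :
    Tendsto (fun N : ℕ => cwExp β N (fun σ => ((∑ i, spin (σ i)) / N) ^ K))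
      atTop (𝓝 0) := by
  rw [NormedAddCommGroup.tendsto_nhds_zero]
  intro δ hδ
  set ε := min (δ/2) 1 with hεdef
  have hε : 0 < ε := lt_min (by linarith) one_pos
  have hε1 : ε ≤ 1 := min_le_right _ _
  obtain ⟨c, hc, hcε⟩ := gfun_unif_min ε hε hε1
  have htend := htend_aux c hc
  filter_upwards [htend.eventually_lt_const (show (0:ℝ) < δ/2 by linarith),
    eventually_ge_atTop 1] with N h1 h2
  rw [Real.norm_eq_abs]
  calc |cwExp β N (fun σ => ((∑ i, spin (σ i)) / N) ^ K)|
      ≤ ε + (N+1) * Real.exp (-(N*c)) :=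
        main_bound β ε c hβ0 hβ1 hε hε1 hc hcε K N hK h2
    _ < δ/2 + δ/2 := by
        have := min_le_left (δ/2) 1
        have : ε ≤ δ/2 := min_le_left _ _
        linarith
    _ = δ := by ring
end
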